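/- arXiv:2202.08829 — 2 statements merged into one kernel-verified Lean document; each statement's English description precedes it below -/
import Mathlib

section
/- For all m ≥ 1, n ≥ 0, and positive reals x_1,…,x_m, Abel's multinomial sum with parameters p_1 = … = p_{m−1} = −1 and p_m = 0 evaluates as A_n(x_1,…,x_m; −1,…,−1,0) = x_m (x_1 + … + x_m + n)^n / (x_1 x_2 ⋯ x_m). -/
open Finset

/-- Abel's multinomial sum
`A_n(x_1,…,x_m; p_1,…,p_m) = Σ_{s_1+⋯+s_m=n} multinomial(n; s) ∏_j (s_j + x_j)^(s_j + p_j)`,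
the sum running over `m`-tuples of nonnegative integers summing to `n`, with integer
exponents interpreted as integer powers of positive reals. -/
noncomputable def abelSum (m n : ℕ) (x : Fin m → ℝ) (p : Fin m → ℤ) : ℝ :=
  ∑ s ∈ Finset.Nat.antidiagonalTuple m n,
    (Nat.multinomial Finset.univ s : ℝ) * ∏ j, ((s j : ℝ) + x j) ^ ((s j : ℤ) + p j)

/-!
Splitting off the first coordinate of the tuple writes the sum in `m + 1` variables as a binomial
convolution of `(k + x₁)^(k - 1)` with sums in the remaining `m` variables; by induction on `m`
those equal `x_m (x₂ + ⋯ + x_m + n - k)^(n - k) / (x₂ ⋯ x_m)`, so everything reduces to Abel's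
binomial identity `x Σ C(n,k) (x + k)^(k-1) (y + n - k)^(n-k) = (x + y + n)^n`. That identity
follows by induction on `n` together with its companion
`x y Σ C(n+1,k) (x + k)^(k-1) (y + n + 1 - k)^(n-k) = (x + y) (x + y + n + 1)^n`:
Pascal's rule and the symmetry `k ↔ n - k` give the companion from the identity at `n`, and
writing `(y + j)^j = y (y + j)^(j-1) + j (y + j)^(j-1)` gives the identity at `n + 1`.
-/

theorem Finset.Nat.sum_antidiagonalTuple_succ {M : Type*} [AddCommMonoid M] (m n : ℕ)
    (f : (Fin (m + 1) → ℕ) → M) :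
    ∑ s ∈ antidiagonalTuple (m + 1) n, f s =
      ∑ ij ∈ antidiagonal n, ∑ t ∈ antidiagonalTuple m ij.2, f (Fin.cons ij.1 t) := by
  rw [Finset.sum_sigma']
  refine Finset.sum_nbij' (fun s => ⟨(s 0, ∑ i, Fin.tail s i), Fin.tail s⟩)
    (fun q => Fin.cons q.1.1 q.2) ?_ ?_ (fun s _ => Fin.cons_self_tail s) ?_
    (fun s _ => by rw [Fin.cons_self_tail])
  · intro s hs
    rw [mem_sigma, HasAntidiagonal.mem_antidiagonal, mem_antidiagonalTuple,
      ← mem_antidiagonalTuple.mp hs, Fin.sum_univ_succ]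
    exact ⟨rfl, rfl⟩
  · rintro ⟨⟨k, r⟩, t⟩ hq
    rw [mem_sigma, HasAntidiagonal.mem_antidiagonal, mem_antidiagonalTuple] at hq
    rw [mem_antidiagonalTuple, Fin.sum_cons, hq.2, hq.1]
  · rintro ⟨⟨k, r⟩, t⟩ hq
    rw [mem_sigma, mem_antidiagonalTuple] at hq
    simp [hq.2]

theorem Nat.multinomial_univ_fin_cons (m k : ℕ) (t : Fin m → ℕ) :
    Nat.multinomial univ (Fin.cons k t : Fin (m + 1) → ℕ) =
      (k + ∑ i, t i).choose k * Nat.multinomial univ t := by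
  rw [Fin.univ_succ, Nat.multinomial_cons]
  simp [Nat.multinomial, Finset.sum_map, Finset.prod_map]

theorem abelSum_succ (m n : ℕ) (x : Fin (m + 1) → ℝ) (p : Fin (m + 1) → ℤ) :
    abelSum (m + 1) n x p = ∑ ij ∈ antidiagonal n,
      (n.choose ij.1 : ℝ) * ((ij.1 : ℝ) + x 0) ^ ((ij.1 : ℤ) + p 0) *
        abelSum m ij.2 (Fin.tail x) (Fin.tail p) := by
  rw [abelSum, Finset.Nat.sum_antidiagonalTuple_succ]
  refine Finset.sum_congr rfl fun ij hij => ?_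
  rw [abelSum, Finset.mul_sum]
  refine Finset.sum_congr rfl fun t ht => ?_
  rw [Nat.multinomial_univ_fin_cons, Finset.Nat.mem_antidiagonalTuple.mp ht,
    mem_antidiagonal.mp hij, Fin.prod_univ_succ]
  simp only [Fin.cons_zero, Fin.cons_succ, Fin.tail, Nat.cast_mul]
  ring

theorem abelSum_one (n : ℕ) (x : Fin 1 → ℝ) (p : Fin 1 → ℤ) :
    abelSum 1 n x p = ((n : ℝ) + x 0) ^ ((n : ℤ) + p 0) := by
  simp [abelSum, Nat.multinomial, Nat.factorial_ne_zero]

-- `abelSum 2`, indexed by `antidiagonal n` rather than by tuples `Fin 2 → ℕ`.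
noncomputable def abelSum₂ (n : ℕ) (x y : ℝ) (p q : ℤ) : ℝ :=
  ∑ ij ∈ antidiagonal n,
    (n.choose ij.1 : ℝ) * ((ij.1 : ℝ) + x) ^ ((ij.1 : ℤ) + p) * ((ij.2 : ℝ) + y) ^ ((ij.2 : ℤ) + q)

theorem abelSum₂_comm (n : ℕ) (x y : ℝ) (p q : ℤ) : abelSum₂ n x y p q = abelSum₂ n y x q p := by
  rw [abelSum₂, abelSum₂, ← Finset.Nat.sum_antidiagonal_swap]
  refine Finset.sum_congr rfl fun ij hij => ?_
  rw [Nat.choose_symm_of_eq_add (mem_antidiagonal.mp hij).symm, Prod.fst_swap, Prod.snd_swap]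
  ring

theorem abelSum₂_succ (n : ℕ) (x y : ℝ) (p q : ℤ) :
    abelSum₂ (n + 1) x y p q = abelSum₂ n x (y + 1) p (q + 1) + abelSum₂ n (x + 1) y (p + 1) q := by
  simp only [abelSum₂, mul_assoc]
  rw [Finset.sum_antidiagonal_choose_succ_mul
    (fun i j => ((i : ℝ) + x) ^ ((i : ℤ) + p) * ((j : ℝ) + y) ^ ((j : ℤ) + q))]
  congr 1 <;> refine Finset.sum_congr rfl fun ij hij => ?_
  · push_cast; ring_nf
  · rw [Nat.choose_symm_of_eq_add (mem_antidiagonal.mp hij).symm]; push_cast; ring_nf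

theorem abelSum₂_succ_eq_mul_add {y : ℝ} (hy : 0 < y) (n : ℕ) (x : ℝ) (p q : ℤ) :
    abelSum₂ (n + 1) x y p (q + 1) =
      y * abelSum₂ (n + 1) x y p q + (n + 1) * abelSum₂ n x (y + 1) p (q + 1) := by
  have hsplit : ∀ j : ℕ, ((j : ℝ) + y) ^ ((j : ℤ) + (q + 1)) =
      y * ((j : ℝ) + y) ^ ((j : ℤ) + q) + j * ((j : ℝ) + y) ^ ((j : ℤ) + q) := fun j => by
    rw [← add_assoc, zpow_add_one₀ (by positivity)]; ring
  have hchoose : ∀ ij ∈ antidiagonal n, ((n + 1).choose ij.1 : ℝ) * (ij.2 + 1 : ℕ) =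
      (n + 1) * n.choose ij.1 := fun ij hij => by
    have := Nat.choose_mul_succ_eq n ij.1
    rw [show n + 1 - ij.1 = ij.2 + 1 by have := mem_antidiagonal.mp hij; omega] at this
    exact_mod_cast this.symm.trans (mul_comm _ _)
  simp only [abelSum₂, hsplit, mul_add, Finset.sum_add_distrib, Finset.mul_sum]
  congr 1
  · refine Finset.sum_congr rfl fun ij _ => by ring
  · rw [Finset.Nat.sum_antidiagonal_succ']
    simp only [Nat.cast_zero, mul_zero, zero_mul, zero_add]
    refine Finset.sum_congr rfl fun ij hij => ?_
    have := hchoose ij hij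
    push_cast at this ⊢
    linear_combination (norm := ring_nf) (((ij.1 : ℝ) + x) ^ ((ij.1 : ℤ) + p) *
      ((ij.2 : ℝ) + (y + 1)) ^ ((ij.2 : ℤ) + (q + 1))) * this

theorem abelSum₂_neg_one_zero (n : ℕ) {x y : ℝ} (hx : 0 < x) (hy : 0 < y) :
    x * abelSum₂ n x y (-1) 0 = (x + y + n) ^ n := by
  induction n generalizing x y with
  | zero => simp [abelSum₂, hx.ne']
  | succ n ih =>
    have companion : x * y * abelSum₂ (n + 1) x y (-1) (-1) = (x + y) * (x + y + (n + 1)) ^ n := by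
      rw [abelSum₂_succ, abelSum₂_comm n (x + 1) y, neg_add_cancel]
      linear_combination y * ih hx (by positivity : 0 < y + 1) + x * ih hy (by positivity : 0 < x + 1)
    have hsplit := abelSum₂_succ_eq_mul_add hy n x (-1) (-1)
    rw [neg_add_cancel] at hsplit
    rw [hsplit]
    push_cast
    linear_combination companion + (n + 1) * ih hx (by positivity : 0 < y + 1)

theorem abelSum_neg_one_zero_last (m n : ℕ) (x : Fin (m + 1) → ℝ) (hx : ∀ i, 0 < x i) :
    abelSum (m + 1) n x (fun i => if (i : ℕ) = m then 0 else -1) =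
      x (Fin.last m) * ((∑ i, x i) + n) ^ n / ∏ i, x i := by
  induction m generalizing n with
  | zero =>
    rw [abelSum_one]
    simp [mul_div_cancel_left₀ _ (hx 0).ne', add_comm]
  | succ m ih =>
    have htail : Fin.tail (fun i : Fin (m + 2) => if (i : ℕ) = m + 1 then (0 : ℤ) else -1) =
        fun i : Fin (m + 1) => if (i : ℕ) = m then 0 else -1 := by
      funext i
      simp [Fin.tail]
    have hreduce : abelSum (m + 2) n x (fun i => if (i : ℕ) = m + 1 then 0 else -1) =
        x (Fin.last (m + 1)) / (∏ i : Fin (m + 1), x i.succ) *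
          abelSum₂ n (x 0) (∑ i : Fin (m + 1), x i.succ) (-1) 0 := by
      rw [abelSum_succ, htail, abelSum₂, Finset.mul_sum]
      refine Finset.sum_congr rfl fun ij _ => ?_
      rw [ih _ (Fin.tail x) fun i => hx i.succ]
      simp only [Fin.coe_ofNat_eq_mod, Nat.zero_mod, Nat.right_eq_add, Nat.add_eq_zero_iff,
        one_ne_zero, and_false, ↓reduceIte, Int.reduceNeg, Fin.tail, Fin.succ_last,
        Nat.succ_eq_add_one, add_zero, zpow_natCast]
      ring
    have hX : 0 < ∑ i : Fin (m + 1), x i.succ := sum_pos (fun i _ => hx i.succ) univ_nonempty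
    have hP : 0 < ∏ i : Fin (m + 1), x i.succ := prod_pos fun i _ => hx i.succ
    rw [hreduce, Fin.sum_univ_succ x, Fin.prod_univ_succ x, div_mul_eq_mul_div,
      div_eq_div_iff hP.ne' (mul_pos (hx 0) hP).ne']
    linear_combination (x (Fin.last (m + 1)) * ∏ i : Fin (m + 1), x i.succ) *
      abelSum₂_neg_one_zero n (hx 0) hX

/-- Abel's multinomial theorem, `p_1 = ⋯ = p_{m-1} = -1`, `p_m = 0`:
`A_n(x_1,…,x_m; -1,…,-1,0) = x_m (x_1+⋯+x_m+n)^n / (x_1 x_2 ⋯ x_m)`. -/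
theorem abelSum_neg_one_zero (m n : ℕ) (hm : 1 ≤ m) (x : Fin m → ℝ) (hx : ∀ i, 0 < x i) :
    abelSum m n x (fun i => if (i : ℕ) = m - 1 then 0 else -1) =
      x ⟨m - 1, by omega⟩ * ((∑ i, x i) + n) ^ n / ∏ i, x i := by
  obtain ⟨m, rfl⟩ : ∃ k, m = k + 1 := ⟨m - 1, by omega⟩
  simpa [Fin.last] using abelSum_neg_one_zero_last m n x hx
end

section
/- For every fixed positive integer k, as n → ∞ the total number of parking completions over all k-element subsets of occupied spots satisfies Σ_{1 ≤ i_1 < … < i_k ≤ n} |PC_n((i_1,…,i_k))| ~ (n+1)^(n−k) · n^(k−1) / k!, i.e., the ratio of the left side to (n+1)^(n−k) n^(k−1)/k! tends to 1. -/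
open Finset

/-- One-way-street parking process on spots `{1,…,n}`: given already occupied spots `occ` and a
list of preferences, each car parks in the first unoccupied spot `≥` its preference; returns the
final occupied set if all cars park, `none` otherwise. -/
def park (n : ℕ) (occ : Finset ℕ) : List ℕ → Option (Finset ℕ)
  | [] => some occ
  | p :: rest =>
    let avail := (Finset.Icc p n) \ occ
    if h : avail.Nonempty then park n (insert (avail.min' h) occ) rest
    else none

/-- The set of parking completions of the occupied spots `v = (v 0, …, v (ℓ-1)) ∈ [n]^ℓ`:
preference sequences of length `n - ℓ` (encoded 0-indexed, coordinate value `i` meaning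
preference `i+1`) for which all remaining cars park. -/
def PC (n : ℕ) {ℓ : ℕ} (v : Fin ℓ → ℕ) : Finset (Fin (n - ℓ) → Fin n) :=
  Finset.univ.filter
    (fun π => (park n (Finset.univ.image v) (List.ofFn (fun i => (π i : ℕ) + 1))).isSome)

/-! Pollak's circular argument. Place the spots `1, …, n` on the circle `ZMod (n + 1)`; the extra
spot `0` plays the role of `n + 1`, and a car fails to park in `[n]` exactly when circular parking
would put it on `0`. With `k` occupied spots and `n - k` cars, circular parking always leaves exactly
one spot free, and rotating occupied spots and preferences together shows that every spot is the
free one equally often. Hence `(n + 1) · Σ |PC| = C(n + 1, k) (n + 1)^(n - k)`, that is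
`k! · Σ |PC| = n (n - 1) ⋯ (n - k + 2) · (n + 1)^(n - k)`, and this descending factorial is
asymptotic to `n^(k - 1)`. -/

section CircularParking

variable {m : ℕ}

-- On a full circle `sInf ∅ = 0`, so the car stays at `p`; this case never occurs below.
noncomputable def circularNextFree (occ : Finset (ZMod m)) (p : ZMod m) : ZMod m :=
  p + (sInf {d : ℕ | p + d ∉ occ} : ℕ)

noncomputable def circularPark (occ : Finset (ZMod m)) : List (ZMod m) → Finset (ZMod m)
  | [] => occ
  | p :: l => circularPark (insert (circularNextFree occ p) occ) l

@[simp] lemma circularPark_cons (occ : Finset (ZMod m)) (p : ZMod m) (l : List (ZMod m)) :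
    circularPark occ (p :: l) = circularPark (insert (circularNextFree occ p) occ) l := rfl

lemma circularNextFree_eq_add {occ : Finset (ZMod m)} {p : ZMod m} {d : ℕ}
    (hd : p + d ∉ occ) (hlt : ∀ e < d, p + e ∈ occ) : circularNextFree occ p = p + d := by
  have hinf : sInf {d : ℕ | p + d ∉ occ} = d :=
    le_antisymm (Nat.sInf_le hd) (not_lt.1 fun h => (Nat.sInf_mem (s := {d : ℕ | p + d ∉ occ})
      ⟨d, hd⟩) (hlt _ h))
  rw [circularNextFree, hinf]

lemma circularNextFree_of_notMem {occ : Finset (ZMod m)} {p : ZMod m} (hp : p ∉ occ) :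
    circularNextFree occ p = p := by
  simpa using circularNextFree_eq_add (d := 0) (by simpa using hp) (by simp)

lemma circularNextFree_notMem [NeZero m] {occ : Finset (ZMod m)} (p : ZMod m)
    (hocc : occ ≠ univ) : circularNextFree occ p ∉ occ := by
  obtain ⟨q, hq⟩ : ∃ q, q ∉ occ := by simpa [eq_univ_iff_forall] using hocc
  have hfree : (q - p).val ∈ {d : ℕ | p + d ∉ occ} := by simpa using hq
  exact Nat.sInf_mem ⟨_, hfree⟩

lemma circularNextFree_map_addRight (occ : Finset (ZMod m)) (p t : ZMod m) :
    circularNextFree (occ.map (Equiv.addRight t).toEmbedding) (p + t) =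
      circularNextFree occ p + t := by
  have hset : {d : ℕ | p + t + d ∉ occ.map (Equiv.addRight t).toEmbedding} =
      {d : ℕ | p + d ∉ occ} := by
    ext d
    simp [add_right_comm p t]
  rw [circularNextFree, circularNextFree, hset, add_right_comm]

lemma circularPark_map_addRight (t : ZMod m) (occ : Finset (ZMod m)) (l : List (ZMod m)) :
    circularPark (occ.map (Equiv.addRight t).toEmbedding) (l.map (· + t)) =
      (circularPark occ l).map (Equiv.addRight t).toEmbedding := by
  induction l generalizing occ with
  | nil => rfl
  | cons p l ih =>
    rw [List.map_cons, circularPark_cons, circularPark_cons, circularNextFree_map_addRight, ← ih]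
    simp [map_insert]

lemma mem_circularPark_of_mem {x : ZMod m} {occ : Finset (ZMod m)} (l : List (ZMod m))
    (hx : x ∈ occ) : x ∈ circularPark occ l := by
  induction l generalizing occ with
  | nil => exact hx
  | cons p l ih => exact ih (mem_insert_of_mem hx)

lemma mem_circularPark_of_mem_list {p : ZMod m} (occ : Finset (ZMod m)) {l : List (ZMod m)}
    (hp : p ∈ l) : p ∈ circularPark occ l := by
  induction l generalizing occ with
  | nil => cases hp
  | cons q l ih =>
    rcases List.mem_cons.1 hp with rfl | hp
    · by_cases hocc : p ∈ occ
      · exact mem_circularPark_of_mem _ hocc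
      · rw [circularPark_cons, circularNextFree_of_notMem hocc]
        exact mem_circularPark_of_mem _ (mem_insert_self _ _)
    · exact ih _ hp

lemma card_circularPark [NeZero m] (occ : Finset (ZMod m)) (l : List (ZMod m))
    (h : #occ + l.length ≤ m) : #(circularPark occ l) = #occ + l.length := by
  induction l generalizing occ with
  | nil => rfl
  | cons p l ih =>
    have hocc : occ ≠ univ := by
      rintro rfl
      simp [ZMod.card] at h
    have hcard := card_insert_of_notMem (circularNextFree_notMem p hocc)
    rw [circularPark_cons, ih _ (by simp at h; omega), hcard, List.length_cons]
    ring

lemma card_compl_circularPark [NeZero m] (occ : Finset (ZMod m)) (l : List (ZMod m))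
    (h : #occ + l.length + 1 = m) : #(circularPark occ l)ᶜ = 1 := by
  rw [card_compl, card_circularPark occ l (by omega), ZMod.card]
  omega

variable [NeZero m]

noncomputable def numLeavingFree (r : ℕ) (occ : Finset (ZMod m)) (t : ZMod m) : ℕ :=
  #{ρ : Fin r → ZMod m | t ∉ circularPark occ (List.ofFn ρ)}

lemma numLeavingFree_eq_zero_of_mem {r : ℕ} {occ : Finset (ZMod m)} {t : ZMod m}
    (ht : t ∈ occ) : numLeavingFree r occ t = 0 := by
  simp [numLeavingFree, mem_circularPark_of_mem _ ht]

lemma numLeavingFree_map_addRight (r : ℕ) (occ : Finset (ZMod m)) (s t : ZMod m) :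
    numLeavingFree r (occ.map (Equiv.addRight t).toEmbedding) (s + t) =
      numLeavingFree r occ s := by
  refine (card_equiv (Equiv.addRight fun _ => t) fun ρ => ?_).symm
  have hlist : List.ofFn (ρ + fun _ => t) = (List.ofFn ρ).map (· + t) := by
    rw [List.map_ofFn]; rfl
  simp only [mem_filter, mem_univ, true_and, Equiv.coe_addRight, hlist,
    circularPark_map_addRight, mem_map_equiv]
  simp

lemma sum_numLeavingFree {r : ℕ} {occ : Finset (ZMod m)}
    (h : #occ + r + 1 = m) : ∑ t, numLeavingFree r occ t = m ^ r := by
  have hdouble := sum_card_bipartiteAbove_eq_sum_card_bipartiteBelow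
    (fun (t : ZMod m) (ρ : Fin r → ZMod m) => t ∉ circularPark occ (List.ofFn ρ))
    (s := univ) (t := univ)
  simp only [bipartiteAbove, bipartiteBelow] at hdouble
  simp only [numLeavingFree, hdouble]
  have hcompl : ∀ ρ : Fin r → ZMod m, #{t | t ∉ circularPark occ (List.ofFn ρ)} = 1 := fun ρ => by
    rw [filter_not, filter_mem_eq_inter, univ_inter, ← compl_eq_univ_sdiff,
      card_compl_circularPark _ _ (by rw [List.length_ofFn, h])]
  simp [hcompl]

lemma sum_powersetCard_numLeavingFree (k r : ℕ) (t : ZMod m) :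
    ∑ T ∈ powersetCard k univ, numLeavingFree r T t =
      ∑ T ∈ powersetCard k (univ : Finset (ZMod m)), numLeavingFree r T 0 := by
  conv_lhs => rw [← univ_map_equiv_to_embedding (Equiv.addRight t), powersetCard_map, sum_map]
  exact sum_congr rfl fun T _ => by simpa using numLeavingFree_map_addRight r T 0 t

lemma card_mul_sum_numLeavingFree {k r : ℕ} (h : k + r + 1 = m) :
    m * ∑ T ∈ powersetCard k (univ : Finset (ZMod m)), numLeavingFree r T 0 =
      m.choose k * m ^ r := by
  calc m * ∑ T ∈ powersetCard k (univ : Finset (ZMod m)), numLeavingFree r T 0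
      = ∑ t : ZMod m, ∑ T ∈ powersetCard k univ, numLeavingFree r T t := by
        simp [sum_powersetCard_numLeavingFree, ZMod.card]
    _ = ∑ T ∈ powersetCard k univ, m ^ r := by
        rw [sum_comm]
        exact sum_congr rfl fun T hT => sum_numLeavingFree (by rw [(mem_powersetCard.1 hT).2, h])
    _ = m.choose k * m ^ r := by simp [ZMod.card]

end CircularParking

lemma natCast_mem_image_natCast_iff {n : ℕ} {occ : Finset ℕ} (hocc : occ ⊆ Icc 1 n) {a : ℕ}
    (ha : a ≤ n + 1) : (a : ZMod (n + 1)) ∈ occ.image (↑) ↔ a ∈ occ := by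
  refine ⟨fun hmem => ?_, mem_image_of_mem _⟩
  obtain ⟨y, hy, hya⟩ := mem_image.1 hmem
  have hy1 := mem_Icc.1 (hocc hy)
  rw [ZMod.natCast_eq_natCast_iff', Nat.mod_eq_of_lt (by omega : y < n + 1)] at hya
  rcases ha.lt_or_eq with ha | rfl
  · rw [Nat.mod_eq_of_lt ha] at hya
    rwa [← hya]
  · simp at hya
    omega

lemma circularNextFree_image_natCast {n : ℕ} {occ : Finset ℕ} (hocc : occ ⊆ Icc 1 n)
    {p q : ℕ} (hpq : p ≤ q) (hq : q ≤ n + 1) (hqocc : q ∉ occ)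
    (hfull : ∀ x, p ≤ x → x < q → x ∈ occ) :
    circularNextFree (occ.image (↑)) (p : ZMod (n + 1)) = q := by
  have hcast : ∀ e : ℕ, (p : ZMod (n + 1)) + e = (p + e : ℕ) := fun e => by push_cast; rfl
  rw [circularNextFree_eq_add (d := q - p), hcast, Nat.add_sub_cancel' hpq]
  · rwa [hcast, Nat.add_sub_cancel' hpq, natCast_mem_image_natCast_iff hocc hq]
  · intro e he
    rw [hcast, natCast_mem_image_natCast_iff hocc (by omega)]
    exact hfull _ (by omega) (by omega)

lemma park_isSome_iff {n : ℕ} {occ : Finset ℕ} {l : List ℕ} (hocc : occ ⊆ Icc 1 n)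
    (hl : ∀ p ∈ l, p ∈ Icc 1 n) :
    (park n occ l).isSome ↔
      (0 : ZMod (n + 1)) ∉ circularPark (occ.image (↑)) (l.map (↑)) := by
  induction l generalizing occ with
  | nil =>
    simp only [park, Option.isSome_some, List.map_nil, circularPark, true_iff]
    rw [← Nat.cast_zero, natCast_mem_image_natCast_iff hocc (Nat.zero_le _)]
    exact fun h0 => by simpa using hocc h0
  | cons p l ih =>
    obtain ⟨hp1, hpn⟩ := mem_Icc.1 (hl p List.mem_cons_self)
    rw [List.map_cons, circularPark_cons]
    by_cases havail : (Icc p n \ occ).Nonempty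
    · set q := (Icc p n \ occ).min' havail
      obtain ⟨hqIcc, hqocc⟩ := mem_sdiff.1 (min'_mem _ havail)
      obtain ⟨hpq, hqn⟩ := mem_Icc.1 hqIcc
      have hnext : circularNextFree (occ.image (↑)) (p : ZMod (n + 1)) = q :=
        circularNextFree_image_natCast hocc hpq (by omega) hqocc fun x hpx hxq =>
          by_contra fun hx => (min'_le _ x (by simp [*]; omega)).not_gt hxq
      rw [park, dif_pos havail, hnext, ← image_insert]
      exact ih (insert_subset (mem_Icc.2 ⟨by omega, hqn⟩) hocc)
        fun x hx => hl x (List.mem_cons_of_mem _ hx)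
    · have hnext : circularNextFree (occ.image (↑)) (p : ZMod (n + 1)) = 0 := by
        rw [← ZMod.natCast_self (n + 1)]
        refine circularNextFree_image_natCast hocc (by omega) le_rfl
          (fun h => by simpa using hocc h) fun x hpx hxn => ?_
        by_contra hx
        exact havail ⟨x, by simp [*]; omega⟩
      rw [park, dif_neg havail, hnext]
      simpa using mem_circularPark_of_mem _ (mem_insert_self _ _)

lemma sum_image_strictMono {α M : Type*} [LinearOrder α] [Fintype α]
    [AddCommMonoid M] {k : ℕ} [DecidablePred fun w : Fin k → α => StrictMono w]
    (f : Finset α → M) :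
    ∑ w ∈ univ.filter (fun w : Fin k → α => StrictMono w), f (univ.image w) =
      ∑ S ∈ powersetCard k univ, f S := by
  refine sum_bij (fun w _ => univ.image w) (fun w hw => ?_) (fun w hw w' hw' hww' => ?_)
    (fun S hS => ?_) fun _ _ => rfl
  · rw [mem_powersetCard, card_image_of_injective _ (mem_filter.1 hw).2.injective]
    simp
  · refine ((mem_filter.1 hw).2.range_inj (mem_filter.1 hw').2).1 ?_
    simpa using congrArg (fun S : Finset α => (S : Set α)) hww'
  · have hcard := (mem_powersetCard.1 hS).2
    exact ⟨S.orderEmbOfFin hcard, mem_filter.2 ⟨mem_univ _, (S.orderEmbOfFin hcard).strictMono⟩,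
      image_orderEmbOfFin_univ S hcard⟩

def succCastEmb (n : ℕ) : Fin n ↪ ZMod (n + 1) :=
  ⟨fun x => ((x + 1 : ℕ) : ZMod (n + 1)), fun x y hxy => by
    simpa [ZMod.natCast_eq_natCast_iff', Nat.mod_eq_of_lt, Fin.ext_iff] using hxy⟩

lemma exists_succCastEmb_eq {n : ℕ} {x : ZMod (n + 1)} (hx : x ≠ 0) :
    ∃ y, succCastEmb n y = x := by
  have hval : x.val ≠ 0 := (ZMod.val_ne_zero x).2 hx
  refine ⟨⟨x.val - 1, by have := ZMod.val_lt x; omega⟩, ?_⟩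
  change ((x.val - 1 + 1 : ℕ) : ZMod (n + 1)) = x
  rw [Nat.sub_add_cancel (Nat.one_le_iff_ne_zero.2 hval), ZMod.natCast_zmod_val]

lemma succCastEmb_ne_zero {n : ℕ} (y : Fin n) : succCastEmb n y ≠ 0 := by
  change ((y + 1 : ℕ) : ZMod (n + 1)) ≠ 0
  rw [Ne, ZMod.natCast_eq_zero_iff]
  exact Nat.not_dvd_of_pos_of_lt y.val.succ_pos (by omega)

lemma map_univ_succCastEmb (n : ℕ) : univ.map (succCastEmb n) = univ.erase 0 := by
  ext x
  simp only [mem_map, mem_univ, true_and, mem_erase, and_true]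
  exact ⟨fun ⟨y, hy⟩ => hy ▸ succCastEmb_ne_zero y, exists_succCastEmb_eq⟩

lemma mem_PC_iff {n k : ℕ} (w : Fin k → Fin n) (π : Fin (n - k) → Fin n) :
    π ∈ PC n (fun j => (w j : ℕ) + 1) ↔
      (0 : ZMod (n + 1)) ∉
        circularPark ((univ.image w).map (succCastEmb n)) (List.ofFn (succCastEmb n ∘ π)) := by
  have hocc : univ.image (fun j => (w j : ℕ) + 1) ⊆ Icc 1 n := fun x hx => by
    obtain ⟨j, -, rfl⟩ := mem_image.1 hx
    exact mem_Icc.2 ⟨by omega, (w j).isLt⟩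
  have hl : ∀ p ∈ List.ofFn (fun i => (π i : ℕ) + 1), p ∈ Icc 1 n := fun p hp => by
    obtain ⟨i, rfl⟩ := List.mem_ofFn.1 hp
    exact mem_Icc.2 ⟨by omega, (π i).isLt⟩
  rw [PC, mem_filter, park_isSome_iff hocc hl, List.map_ofFn, image_image, map_eq_image,
    image_image]
  simp only [mem_univ, true_and]
  rfl

lemma card_PC_eq_numLeavingFree {n k : ℕ} (w : Fin k → Fin n) :
    #(PC n fun j => (w j : ℕ) + 1) =
      numLeavingFree (n - k) ((univ.image w).map (succCastEmb n)) 0 := by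
  refine card_bij (fun π _ => succCastEmb n ∘ π) (fun π hπ => ?_)
    (fun π _ π' _ h => (succCastEmb n).injective.comp_left h) fun ρ hρ => ?_
  · simpa [numLeavingFree] using (mem_PC_iff w π).1 hπ
  · have hρ0 : ∀ i, ρ i ≠ 0 := fun i hi =>
      (mem_filter.1 hρ).2 (hi ▸ mem_circularPark_of_mem_list _ (List.mem_ofFn.2 ⟨i, rfl⟩))
    choose π hπ using fun i => exists_succCastEmb_eq (hρ0 i)
    have hρπ : succCastEmb n ∘ π = ρ := funext hπ
    exact ⟨π, (mem_PC_iff w π).2 (hρπ ▸ (mem_filter.1 hρ).2), hρπ⟩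

lemma sum_card_PC_eq_sum_numLeavingFree (n k : ℕ) :
    ∑ w ∈ univ.filter (fun w : Fin k → Fin n => StrictMono w),
        #(PC n fun j => (w j : ℕ) + 1) =
      ∑ T ∈ powersetCard k (univ : Finset (ZMod (n + 1))), numLeavingFree (n - k) T 0 :=
  calc ∑ w ∈ univ.filter (fun w : Fin k → Fin n => StrictMono w),
        #(PC n fun j => (w j : ℕ) + 1)
      = ∑ w ∈ univ.filter (fun w : Fin k → Fin n => StrictMono w),
          numLeavingFree (n - k) ((univ.image w).map (succCastEmb n)) 0 :=
        sum_congr rfl fun w _ => card_PC_eq_numLeavingFree w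
    _ = ∑ S ∈ powersetCard k univ, numLeavingFree (n - k) (S.map (succCastEmb n)) 0 :=
        sum_image_strictMono fun S => numLeavingFree (n - k) (S.map (succCastEmb n)) 0
    _ = ∑ T ∈ powersetCard k (univ.erase 0), numLeavingFree (n - k) T 0 := by
        rw [← map_univ_succCastEmb, powersetCard_map, sum_map]
        rfl
    _ = ∑ T ∈ powersetCard k univ, numLeavingFree (n - k) T 0 :=
        sum_subset (powersetCard_mono (erase_subset _ _)) fun T hT hT' =>
          numLeavingFree_eq_zero_of_mem <| by_contra fun h0 => hT' <|
            mem_powersetCard.2 ⟨subset_erase.2 ⟨subset_univ _, h0⟩, (mem_powersetCard.1 hT).2⟩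

lemma factorial_mul_sum_card_PC {n k : ℕ} (hk : 1 ≤ k) (hkn : k ≤ n) :
    k.factorial * ∑ w ∈ univ.filter (fun w : Fin k → Fin n => StrictMono w),
        #(PC n fun j => (w j : ℕ) + 1) =
      n.descFactorial (k - 1) * (n + 1) ^ (n - k) := by
  obtain ⟨j, rfl⟩ := Nat.exists_eq_add_of_le' hk
  refine Nat.eq_of_mul_eq_mul_left (by omega : 0 < n + 1) ?_
  rw [mul_left_comm, sum_card_PC_eq_sum_numLeavingFree,
    card_mul_sum_numLeavingFree (by omega : j + 1 + (n - (j + 1)) + 1 = n + 1), ← mul_assoc,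
    ← Nat.descFactorial_eq_factorial_mul_choose, Nat.succ_descFactorial_succ, Nat.add_sub_cancel]
  ring

/-- For fixed `k ≥ 1`, the total number of parking completions over all strictly increasing
`k`-tuples `1 ≤ i_1 < ⋯ < i_k ≤ n` of occupied spots (tuples encoded as strictly monotone
maps `w : Fin k → Fin n`, with spot values `w j + 1`) is asymptotic to
`(n+1)^(n-k) n^(k-1) / k!` as `n → ∞`. -/
theorem sum_card_parkingCompletions_asymptotic (k : ℕ) (hk : 1 ≤ k) :
    Filter.Tendsto
      (fun n : ℕ =>
        (∑ w ∈ Finset.univ.filter (fun w : Fin k → Fin n => StrictMono w),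
            ((PC n (fun j : Fin k => (w j : ℕ) + 1)).card : ℝ))
          / (((n : ℝ) + 1) ^ (n - k) * (n : ℝ) ^ (k - 1) / Nat.factorial k))
      Filter.atTop (nhds 1) := by
  have hpow : ∀ᶠ n : ℕ in Filter.atTop, ((n : ℝ) ^ (k - 1)) ≠ 0 :=
    Filter.eventually_atTop.2 ⟨1, fun n hn => pow_ne_zero _ (by exact_mod_cast (by omega : n ≠ 0))⟩
  refine ((Asymptotics.isEquivalent_iff_tendsto_one hpow).1
    (isEquivalent_descFactorial (k - 1))).congr' ?_
  filter_upwards [Filter.eventually_ge_atTop k] with n hn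
  have hcount := congrArg (Nat.cast : ℕ → ℝ) (factorial_mul_sum_card_PC hk hn)
  push_cast at hcount
  have hn0 : (n : ℝ) ≠ 0 := by exact_mod_cast (by omega : n ≠ 0)
  rw [Pi.div_apply]
  field_simp
  linear_combination -hcount
end
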